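/- Let G be a group generated by a subset S, let D = D(S^G) be the Dehn quandle of G with respect to S, let n ≥ 2, and let π : D → D_n be a universal n-quandle quotient. Then there is a surjective group homomorphism Φ̃ : Env(D_n) → H_n := G/⟪x^n y x^{-n} y^{-1} : x, y ∈ S⟫ such that Φ̃(e_{π(c)}) equals the image of c in H_n for every c ∈ D, where ⟪·⟫ denotes normal closure. -/

import Mathlib

open Quandles

universe u v

/-- The Dehn quandle of a group `G` with respect to a subset `S`: the set of all
conjugates of elements of `S`, with conjugation as the quandle operation.
(The paper's `x * y = y x y⁻¹` is Mathlib's `y ◃ x`.) -/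
def DehnQuandle (G : Type*) [Group G] (S : Set G) : Type _ :=
  {x : G // ∃ s ∈ S, IsConj s x}

instance (G : Type*) [Group G] (S : Set G) : Quandle (DehnQuandle G S) where
  act x y := ⟨x.1 * y.1 * x.1⁻¹, by
    obtain ⟨s, hs, hc⟩ := y.2
    exact ⟨s, hs, hc.trans (isConj_iff.mpr ⟨x.1, rfl⟩)⟩⟩
  self_distrib := by
    rintro ⟨x, hx⟩ ⟨y, hy⟩ ⟨z, hz⟩
    apply Subtype.ext
    show x * (y * z * y⁻¹) * x⁻¹ = (x * y * x⁻¹) * (x * z * x⁻¹) * (x * y * x⁻¹)⁻¹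
    group
  invAct x y := ⟨x.1⁻¹ * y.1 * x.1, by
    obtain ⟨s, hs, hc⟩ := y.2
    exact ⟨s, hs, hc.trans (isConj_iff.mpr ⟨x.1⁻¹, by group⟩)⟩⟩
  left_inv := by
    rintro ⟨x, hx⟩ ⟨y, hy⟩
    apply Subtype.ext
    show x⁻¹ * (x * y * x⁻¹) * x = y
    group
  right_inv := by
    rintro ⟨x, hx⟩ ⟨y, hy⟩
    apply Subtype.ext
    show x * (x⁻¹ * y * x) * x⁻¹ = y
    group
  fix := by
    rintro ⟨x, hx⟩
    apply Subtype.ext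
    show x * x * x⁻¹ = x
    group

/-- `Q` is an `n`-quandle: `x *ⁿ y = x` for all `x y` (the paper's `x * y` is `y ◃ x`). -/
def IsNQuandle (Q : Type*) [Quandle Q] (n : ℕ) : Prop :=
  ∀ x y : Q, (fun a => y ◃ a)^[n] x = x

/-- `π : Q → Qn` is a universal `n`-quandle quotient. -/
def IsUniversalNQuandleQuotient {Q : Type u} {Qn : Type v} [Quandle Q] [Quandle Qn]
    (n : ℕ) (π : Q →◃ Qn) : Prop :=
  Function.Surjective π ∧ IsNQuandle Qn n ∧
    ∀ (Y : Type max u v) [Quandle Y], IsNQuandle Y n →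
      ∀ f : Q →◃ Y, ∃! g : Qn →◃ Y, ∀ x, g (π x) = f x

/-!
Write `H` for the quotient of `G` by the normal closure of the relators `xⁿ y x⁻ⁿ y⁻¹`. Since `S`
generates `G`, the relators make `xⁿ` central in `H` for every `x ∈ S`; hence every conjugate `z`
of such an `x` also has central `n`-th power, and `z ↦ yⁿ z y⁻ⁿ` is the identity on the Dehn
quandle of `H` with respect to the image of `S`. That Dehn quandle is therefore an `n`-quandle,
so the quotient map `G → H`, viewed as a quandle map between Dehn quandles, factors through `Dₙ`.
The enveloping-group adjunction turns the factored map into a group homomorphism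
`Env(Dₙ) → H`, whose image contains the generating set, the image of `S`.
-/

instance ULift.quandle {Q : Type u} [Quandle Q] : Quandle (ULift.{v} Q) where
  act x y := ⟨x.down ◃ y.down⟩
  self_distrib := by rintro ⟨x⟩ ⟨y⟩ ⟨z⟩; exact congrArg ULift.up Shelf.self_distrib
  invAct x y := ⟨x.down ◃⁻¹ y.down⟩
  left_inv x := by rintro ⟨y⟩; exact congrArg ULift.up (Rack.left_inv x.down y)
  right_inv x := by rintro ⟨y⟩; exact congrArg ULift.up (Rack.right_inv x.down y)
  fix := by rintro ⟨x⟩; exact congrArg ULift.up Quandle.fix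

namespace ULift

variable {Q : Type u} [Quandle Q]

def upQuandleHom : Q →◃ ULift.{v} Q where
  toFun := ULift.up
  map_act' := rfl

def downQuandleHom : ULift.{v} Q →◃ Q where
  toFun := ULift.down
  map_act' := rfl

lemma act_iterate (y x : ULift.{v} Q) (k : ℕ) :
    (fun a => y ◃ a)^[k] x = ⟨(fun a => y.down ◃ a)^[k] x.down⟩ := by
  induction k generalizing x with
  | zero => rfl
  | succ k ih => rw [Function.iterate_succ_apply, Function.iterate_succ_apply, ih]; rfl

end ULift

lemma IsNQuandle.ulift {Q : Type u} [Quandle Q] {n : ℕ} (h : IsNQuandle Q n) :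
    IsNQuandle (ULift.{v} Q) n := by
  intro x y
  rw [ULift.act_iterate, h x.down y.down]

lemma IsUniversalNQuandleQuotient.exists_comp_eq {Q : Type u} {Qn : Type v} [Quandle Q]
    [Quandle Qn] {n : ℕ} {π : Q →◃ Qn} (hπ : IsUniversalNQuandleQuotient n π)
    {Y : Type u} [Quandle Y] (hY : IsNQuandle Y n) (f : Q →◃ Y) :
    ∃ g : Qn →◃ Y, ∀ x, g (π x) = f x := by
  -- the definition only quantifies over targets in `Type (max u v)`
  obtain ⟨g, hg, -⟩ := hπ.2.2 (ULift.{v} Y) hY.ulift (ULift.upQuandleHom.comp f)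
  exact ⟨ULift.downQuandleHom.comp g, fun x => congrArg ULift.down (hg x)⟩

lemma Rack.toEnvelGroup.map_toEnvelGroup {R : Type*} [Rack R] {G : Type*} [Group G]
    (f : R →◃ Quandle.Conj G) (x : R) : toEnvelGroup.map f (toEnvelGroup R x) = f x :=
  DFunLike.congr_fun (toEnvelGroup.univ R G f) x

namespace DehnQuandle

variable {G : Type*} [Group G] {S : Set G}

def toConj : DehnQuandle G S →◃ Quandle.Conj G where
  toFun x := x.1
  map_act' := rfl

@[simp]
lemma toConj_apply (x : DehnQuandle G S) : toConj x = x.1 := rfl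

def map {H : Type*} [Group H] (f : G →* H) : DehnQuandle G S →◃ DehnQuandle H (f '' S) where
  toFun x := ⟨f x.1, by
    obtain ⟨s, hs, hc⟩ := x.2
    exact ⟨f s, ⟨s, hs, rfl⟩, f.map_isConj hc⟩⟩
  map_act' {x y} := Subtype.ext <| by
    change f (x.1 * y.1 * x.1⁻¹) = f x.1 * f y.1 * (f x.1)⁻¹
    rw [map_mul, map_mul, map_inv]

@[simp]
lemma map_apply_val {H : Type*} [Group H] (f : G →* H) (x : DehnQuandle G S) :
    (map f x).1 = f x.1 := rfl

lemma val_act_iterate (y x : DehnQuandle G S) (k : ℕ) :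
    ((fun a => y ◃ a)^[k] x).1 = y.1 ^ k * x.1 * (y.1 ^ k)⁻¹ := by
  induction k generalizing x with
  | zero => simp
  | succ k ih =>
    rw [Function.iterate_succ_apply, ih]
    change y.1 ^ k * (y.1 * x.1 * y.1⁻¹) * (y.1 ^ k)⁻¹ = _
    rw [pow_succ]
    group

lemma pow_mem_center {n : ℕ} (hS : ∀ s ∈ S, s ^ n ∈ Subgroup.center G)
    (z : DehnQuandle G S) : z.1 ^ n ∈ Subgroup.center G := by
  obtain ⟨s, hs, hc⟩ := z.2
  obtain ⟨c, hc⟩ := isConj_iff.mp (hc.pow n)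
  rw [← hc]
  exact (Subgroup.center G).normal_of_characteristic.conj_mem _ (hS s hs) c

lemma isNQuandle_of_pow_mem_center {n : ℕ} (hS : ∀ s ∈ S, s ^ n ∈ Subgroup.center G) :
    IsNQuandle (DehnQuandle G S) n := by
  intro x y
  apply Subtype.ext
  rw [val_act_iterate, ((Subgroup.mem_center_iff.mp (pow_mem_center hS y)) x.1).symm]
  group

end DehnQuandle

lemma Subgroup.center_eq_centralizer_of_closure_eq_top {G : Type*} [Group G] {S : Set G}
    (hS : Subgroup.closure S = ⊤) : Subgroup.center G = Subgroup.centralizer S := by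
  rw [← centralizer_univ, ← coe_top, ← hS, centralizer_closure]

lemma Subgroup.closure_image_eq_top {G H : Type*} [Group G] [Group H] {S : Set G}
    (hS : Subgroup.closure S = ⊤) {f : G →* H} (hf : Function.Surjective f) :
    Subgroup.closure (f '' S) = ⊤ := by
  rw [← MonoidHom.map_closure, hS, ← MonoidHom.range_eq_map,
    MonoidHom.range_eq_top_of_surjective _ hf]

lemma MonoidHom.map_mem_center_of_commutator_eq_one {G H : Type*} [Group G] [Group H]
    {S : Set G} (hS : Subgroup.closure S = ⊤) {f : G →* H} (hf : Function.Surjective f) {a : G}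
    (ha : ∀ y ∈ S, f (a * y * a⁻¹ * y⁻¹) = 1) : f a ∈ Subgroup.center H := by
  rw [Subgroup.center_eq_centralizer_of_closure_eq_top (Subgroup.closure_image_eq_top hS hf)]
  rintro _ ⟨y, hy, rfl⟩
  have hrel := ha y hy
  rw [map_mul, map_mul, map_mul, map_inv, map_inv, mul_inv_eq_one, mul_inv_eq_iff_eq_mul] at hrel
  exact hrel.symm

theorem stmt_6_general {G : Type u} [Group G] (S : Set G) (hS : Subgroup.closure S = ⊤)
    {n : ℕ} {Dn : Type v} [Quandle Dn]
    (π : DehnQuandle G S →◃ Dn) (hπ : IsUniversalNQuandleQuotient n π) :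
    ∃ φ : Rack.EnvelGroup Dn →*
        (G ⧸ Subgroup.normalClosure
          {g : G | ∃ x ∈ S, ∃ y ∈ S, g = x ^ n * y * (x ^ n)⁻¹ * y⁻¹}),
      Function.Surjective φ ∧
        ∀ c : DehnQuandle G S,
          φ (Rack.toEnvelGroup Dn (π c)) = QuotientGroup.mk c.1 := by
  set mk := QuotientGroup.mk' (Subgroup.normalClosure
    {g : G | ∃ x ∈ S, ∃ y ∈ S, g = x ^ n * y * (x ^ n)⁻¹ * y⁻¹})
  have hY : IsNQuandle (DehnQuandle _ (mk '' S)) n := by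
    refine DehnQuandle.isNQuandle_of_pow_mem_center ?_
    rintro _ ⟨x, hx, rfl⟩
    rw [← map_pow]
    refine mk.map_mem_center_of_commutator_eq_one hS (QuotientGroup.mk'_surjective _) fun y hy => ?_
    exact (QuotientGroup.eq_one_iff _).mpr (Subgroup.subset_normalClosure ⟨x, hx, y, hy, rfl⟩)
  obtain ⟨g, hg⟩ := hπ.exists_comp_eq hY (DehnQuandle.map mk)
  set φ := Rack.toEnvelGroup.map (DehnQuandle.toConj.comp g)
  have hφ : ∀ c, φ (Rack.toEnvelGroup Dn (π c)) = mk c.1 := fun c => by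
    rw [Rack.toEnvelGroup.map_toEnvelGroup, ShelfHom.comp_apply, hg, DehnQuandle.toConj_apply,
      DehnQuandle.map_apply_val]
  refine ⟨φ, ?_, hφ⟩
  rw [← MonoidHom.range_eq_top, eq_top_iff,
    ← Subgroup.closure_image_eq_top hS (QuotientGroup.mk'_surjective _), Subgroup.closure_le]
  rintro _ ⟨s, hs, rfl⟩
  exact ⟨Rack.toEnvelGroup Dn (π ⟨s, s, hs, IsConj.refl s⟩), hφ _⟩

/-- there is a surjective group homomorphism
`Φ̃ : Env(Dₙ) → Hₙ = G/⟪xⁿ y x⁻ⁿ y⁻¹ : x, y ∈ S⟫` with `Φ̃(e_{π c})` the image of `c`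
for every `c` in the Dehn quandle. -/
theorem stmt_6 {G : Type u} [Group G] (S : Set G) (hS : Subgroup.closure S = ⊤)
    {n : ℕ} (hn : 2 ≤ n) {Dn : Type v} [Quandle Dn]
    (π : DehnQuandle G S →◃ Dn) (hπ : IsUniversalNQuandleQuotient n π) :
    ∃ φ : Rack.EnvelGroup Dn →*
        (G ⧸ Subgroup.normalClosure
          {g : G | ∃ x ∈ S, ∃ y ∈ S, g = x ^ n * y * (x ^ n)⁻¹ * y⁻¹}),
      Function.Surjective φ ∧
        ∀ c : DehnQuandle G S,
          φ (Rack.toEnvelGroup Dn (π c)) = QuotientGroup.mk c.1 :=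
  stmt_6_general S hS π hπ
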